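/- arXiv:1103.3175 — 4 statements merged into one kernel-verified Lean document; each statement's English description precedes it below -/
import Mathlib

section
/- If S is a positive definite symmetric n×n matrix with all entries S_{ij} < 1, then the integral ∫_{Δ_n} (det S)^{1/2} (1 - Σ_{ij} t_i S_{ij} t_j)^{-n/2} dt over the standard simplex Δ_n converges (is finite). -/
open Matrix BigOperators MeasureTheory

/-- for S positive definite symmetric with all entries < 1, the integral
∫_{Δₙ} √(det S) (1 - tᵀSt)^{-n/2} dt over the standard simplex converges. -/
theorem stmt9 (n : ℕ) (S : Matrix (Fin n) (Fin n) ℝ)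
    (hsymm : S.IsSymm) (hpd : S.PosDef) (hlt : ∀ i j, S i j < 1) :
    IntegrableOn
      (fun t : Fin n → ℝ =>
        Real.sqrt S.det / (1 - ∑ i, ∑ j, t i * S i j * t j) ^ ((n : ℝ) / 2))
      {t : Fin n → ℝ | (∀ i, 0 ≤ t i) ∧ ∑ i, t i ≤ 1} := by
  set s : Set (Fin n → ℝ) := {t | (∀ i, 0 ≤ t i) ∧ ∑ i, t i ≤ 1} with hs
  have hq : ∀ t ∈ s, (∑ i, ∑ j, t i * S i j * t j) < 1 := by
    rintro t ⟨ht0, ht1⟩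
    by_cases h : ∀ i, t i = 0
    · simp [h]
    · push_neg at h
      obtain ⟨i0, hi0⟩ := h
      have hti0 : 0 < t i0 := lt_of_le_of_ne (ht0 i0) (Ne.symm hi0)
      have h1 : (∑ i, ∑ j, t i * S i j * t j) < ∑ i, ∑ j, t i * t j := by
        apply Finset.sum_lt_sum
        · intro i _
          apply Finset.sum_le_sum
          intro j _
          nlinarith [mul_nonneg (mul_nonneg (ht0 i) (sub_nonneg.2 (hlt i j).le)) (ht0 j)]
        · refine ⟨i0, Finset.mem_univ _, ?_⟩
          apply Finset.sum_lt_sum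
          · intro j _
            nlinarith [mul_nonneg (mul_nonneg hti0.le (sub_nonneg.2 (hlt i0 j).le)) (ht0 j)]
          · exact ⟨i0, Finset.mem_univ _, by nlinarith [mul_pos (mul_pos hti0 (sub_pos.2 (hlt i0 i0))) hti0]⟩
      have h2 : (∑ i, ∑ j, t i * t j) = (∑ i, t i) * (∑ j, t j) := by
        rw [Finset.sum_mul_sum]
      have hσ : 0 ≤ ∑ i, t i := Finset.sum_nonneg fun i _ => ht0 i
      nlinarith
  have hclosed : IsClosed s := by
    have h1 : IsClosed {t : Fin n → ℝ | ∀ i, 0 ≤ t i} := by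
      have : {t : Fin n → ℝ | ∀ i, 0 ≤ t i} = ⋂ i, {t | 0 ≤ t i} := by
        ext t; simp [Set.mem_iInter]
      rw [this]
      exact isClosed_iInter fun i => isClosed_le continuous_const (continuous_apply i)
    have h2 : IsClosed {t : Fin n → ℝ | ∑ i, t i ≤ 1} :=
      isClosed_le (continuous_finset_sum _ fun i _ => continuous_apply i) continuous_const
    have : s = {t : Fin n → ℝ | ∀ i, 0 ≤ t i} ∩ {t | ∑ i, t i ≤ 1} := by
      ext t; simp [hs, Set.mem_setOf_eq]
    rw [this]; exact h1.inter h2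
  have hsub : s ⊆ Set.Icc (0 : Fin n → ℝ) 1 := by
    rintro t ⟨ht0, ht1⟩
    constructor
    · intro i; exact ht0 i
    · intro i
      calc t i ≤ ∑ j, t j := Finset.single_le_sum (fun j _ => ht0 j) (Finset.mem_univ i)
        _ ≤ 1 := ht1
  have hcompact : IsCompact s := (isCompact_Icc).of_isClosed_subset hclosed hsub
  have hqc : Continuous fun t : Fin n → ℝ => ∑ i, ∑ j, t i * S i j * t j := by
    apply continuous_finset_sum
    intro i _
    apply continuous_finset_sum
    intro j _
    exact ((continuous_apply i).mul continuous_const).mul (continuous_apply j)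
  apply ContinuousOn.integrableOn_compact hcompact
  apply ContinuousOn.div continuousOn_const
  · apply ContinuousOn.rpow_const (continuous_const.sub hqc).continuousOn
    intro t _
    right
    positivity
  · intro t ht
    have : (0:ℝ) < 1 - ∑ i, ∑ j, t i * S i j * t j := by linarith [hq t ht]
    exact (Real.rpow_pos_of_pos this _).ne'
end

section
/- For any positive definite symmetric n×n matrix S with entries S_{ij} < 1 for all i,j, the hyperbolic volume of the region F = {(u,v) ∈ H_{n+1} : u = Σ t_i u_i for some t ∈ Δ_n, v > sqrt(1 - |u|²)} (where u_i·u_j = S_{ij}) with respect to the measure d^n u dv / v^{n+1} equals (1/n) ∫_{Δ_n} (det S)^{1/2}(1 - tᵀSt)^{-n/2} dt. -/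
open Matrix MeasureTheory Set

/-!
Integrating first in the vertical direction, `∫_{√(1-|x|²)}^∞ v^{-n-1} dv = (1-|x|²)^{-n/2}/n`,
so the volume of `F` is `(1/n) ∫_K (1-|x|²)^{-n/2} dx` over the base `K` of the skyscraper. The
linear map `t ↦ ∑ tᵢ uᵢ` carries the simplex onto `K` with Jacobian `|det U| = √(det S)`, where
`U` has rows `uᵢ` so that `U Uᵀ = S`, and `|∑ tᵢ uᵢ|² = tᵀ S t`. Since the entries of `S` are
`< 1`, `tᵀ S t < 1` on the simplex, so the base lies strictly inside the unit ball and every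
integrand is finite.
-/

lemma one_div_pow_succ_eq_rpow_neg {v : ℝ} (hv : 0 ≤ v) (n : ℕ) :
    1 / v ^ (n + 1) = v ^ (-(n + 1 : ℝ)) := by
  rw [Real.rpow_neg hv, one_div]
  norm_cast

lemma lintegral_Ioi_one_div_pow_succ {n : ℕ} (hn : 0 < n) {a : ℝ} (ha : 0 < a) :
    ∫⁻ v in Ioi a, ENNReal.ofReal (1 / v ^ (n + 1)) = ENNReal.ofReal (1 / (n * a ^ n)) := by
  have hexp : -(n + 1 : ℝ) < -1 := by
    have : (0 : ℝ) < n := by exact_mod_cast hn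
    linarith
  rw [setLIntegral_congr_fun measurableSet_Ioi
      (fun v hv => by rw [one_div_pow_succ_eq_rpow_neg (ha.trans hv).le]),
    ← ofReal_integral_eq_lintegral_ofReal (integrableOn_Ioi_rpow_of_lt hexp ha)
      ((ae_restrict_mem measurableSet_Ioi).mono fun v hv => Real.rpow_nonneg (ha.trans hv).le _),
    integral_Ioi_rpow_of_lt hexp ha, show -(n + 1 : ℝ) + 1 = -n by ring,
    Real.rpow_neg ha.le, Real.rpow_natCast]
  congr 1
  field_simp

lemma lintegral_prod_region_above_graph {α : Type*} [MeasurableSpace α] {μ : Measure α}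
    [SFinite μ] {ν : Measure ℝ} [SFinite ν] {K : Set α} (hK : MeasurableSet K) {g : α → ℝ}
    (hg : Measurable g) {f : ℝ → ENNReal} (hf : Measurable f) :
    ∫⁻ p in {p : α × ℝ | p.1 ∈ K ∧ g p.1 < p.2}, f p.2 ∂μ.prod ν =
      ∫⁻ x in K, ∫⁻ v in Ioi (g x), f v ∂ν ∂μ := by
  have hR : MeasurableSet {p : α × ℝ | p.1 ∈ K ∧ g p.1 < p.2} :=
    (measurable_fst hK).inter (measurableSet_lt (hg.comp measurable_fst) measurable_snd)
  have hf_snd : Measurable fun p : α × ℝ => f p.2 := hf.comp measurable_snd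
  rw [← lintegral_indicator hR, lintegral_prod _ (hf_snd.indicator hR).aemeasurable,
    ← lintegral_indicator hK]
  refine lintegral_congr fun x => ?_
  by_cases hx : x ∈ K <;> simp [indicator, hx, ← lintegral_indicator measurableSet_Ioi]

/-- Both sides are `toReal`s of equal lintegrals, so no integrability hypothesis is needed. -/
lemma setIntegral_prod_region_above_graph_one_div_pow_succ {α : Type*} [MeasurableSpace α]
    {μ : Measure α} [SFinite μ] {n : ℕ} (hn : 0 < n) {K : Set α} (hK : MeasurableSet K)
    {g : α → ℝ} (hg : Measurable g) (hg_pos : ∀ x ∈ K, 0 < g x) :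
    ∫ p in {p : α × ℝ | p.1 ∈ K ∧ g p.1 < p.2}, 1 / p.2 ^ (n + 1) ∂μ.prod volume =
      ∫ x in K, 1 / (n * g x ^ n) ∂μ := by
  have hR : MeasurableSet {p : α × ℝ | p.1 ∈ K ∧ g p.1 < p.2} :=
    (measurable_fst hK).inter (measurableSet_lt (hg.comp measurable_fst) measurable_snd)
  rw [integral_eq_lintegral_of_nonneg_ae, integral_eq_lintegral_of_nonneg_ae,
    lintegral_prod_region_above_graph (f := fun v => ENNReal.ofReal (1 / v ^ (n + 1))) hK hg
      (by fun_prop),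
    setLIntegral_congr_fun hK fun x hx => lintegral_Ioi_one_div_pow_succ hn (hg_pos x hx)]
  · filter_upwards [ae_restrict_mem hK] with x hx
    have := hg_pos x hx
    positivity
  · exact (by fun_prop : Measurable _).aestronglyMeasurable
  · filter_upwards [ae_restrict_mem hR] with p ⟨hpK, hp⟩
    have := (hg_pos _ hpK).trans hp
    positivity
  · exact (by fun_prop : Measurable _).aestronglyMeasurable

def cornerSimplex (ι : Type*) [Fintype ι] : Set (ι → ℝ) :=
  {t | (∀ i, 0 ≤ t i) ∧ ∑ i, t i ≤ 1}

lemma isCompact_cornerSimplex (ι : Type*) [Fintype ι] : IsCompact (cornerSimplex ι) := by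
  have hclosed : IsClosed (cornerSimplex ι) := by
    simp only [cornerSimplex, ofPred_and, ofPred_forall]
    exact (isClosed_iInter fun i => isClosed_le continuous_const (continuous_apply i)).inter
        (isClosed_le (by fun_prop) continuous_const)
  refine (isCompact_univ_pi fun _ => isCompact_Icc (a := (0 : ℝ)) (b := 1)).of_isClosed_subset
    hclosed fun t ht i _ => ⟨ht.1 i, ?_⟩
  exact (Finset.single_le_sum (fun j _ => ht.1 j) (Finset.mem_univ i)).trans ht.2

lemma sum_mul_mul_lt_one_of_mem_cornerSimplex {ι : Type*} [Fintype ι] {S : Matrix ι ι ℝ}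
    (hS : ∀ i j, S i j < 1) {t : ι → ℝ} (ht : t ∈ cornerSimplex ι) :
    ∑ i, ∑ j, t i * S i j * t j < 1 := by
  obtain ⟨ht0, ht1⟩ := ht
  by_cases hzero : ∀ i, t i = 0
  · simp [hzero]
  push Not at hzero
  obtain ⟨k, hk⟩ := hzero
  have hk : 0 < t k := (ht0 k).lt_of_ne' hk
  have hle : ∀ i j, t i * S i j * t j ≤ t i * t j := fun i j => by
    nlinarith [mul_nonneg (ht0 i) (ht0 j), hS i j]
  calc ∑ i, ∑ j, t i * S i j * t j < ∑ i, ∑ j, t i * t j :=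
        Finset.sum_lt_sum (fun i _ => Finset.sum_le_sum fun j _ => hle i j)
          ⟨k, Finset.mem_univ k, Finset.sum_lt_sum (fun j _ => hle k j)
            ⟨k, Finset.mem_univ k, by nlinarith [mul_pos hk hk, hS k k]⟩⟩
    _ = (∑ i, t i) * ∑ i, t i := Finset.sum_mul_sum _ _ _ _ |>.symm
    _ ≤ 1 := mul_le_one₀ ht1 (Finset.sum_nonneg fun i _ => ht0 i) ht1

lemma sum_smul_dotProduct_sum_smul {ι κ R : Type*} [Fintype ι] [Fintype κ] [CommSemiring R]
    (t : ι → R) (u : ι → κ → R) :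
    (∑ i, t i • u i) ⬝ᵥ (∑ i, t i • u i) = ∑ i, ∑ j, t i * (u i ⬝ᵥ u j) * t j := by
  simp only [sum_dotProduct, dotProduct_sum, smul_dotProduct, dotProduct_smul, smul_eq_mul,
    Finset.mul_sum]
  refine Finset.sum_congr rfl fun i _ => Finset.sum_congr rfl fun j _ => ?_
  rw [dotProduct_comm]
  ring

lemma det_sq_of_dotProduct_eq {ι : Type*} [Fintype ι] [DecidableEq ι] {u : ι → ι → ℝ}
    {S : Matrix ι ι ℝ} (hS : ∀ i j, u i ⬝ᵥ u j = S i j) : (of u).det ^ 2 = S.det := by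
  have : of u * (of u)ᵀ = S := by
    ext i j
    simpa [mul_apply, dotProduct] using hS i j
  rw [← this, det_mul, det_transpose, sq]

lemma setIntegral_image_sum_smul {ι : Type*} [Fintype ι] [DecidableEq ι] {u : ι → ι → ℝ}
    (hu : (of u).det ≠ 0) {s : Set (ι → ℝ)} (hs : MeasurableSet s) (h : (ι → ℝ) → ℝ) :
    ∫ x in (fun t => ∑ i, t i • u i) '' s, h x = ∫ t in s, |(of u).det| * h (∑ i, t i • u i) := by
  let L : (ι → ℝ) →L[ℝ] (ι → ℝ) := LinearMap.toContinuousLinearMap (toLin' (of u)ᵀ)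
  have hL : ⇑L = fun t => ∑ i, t i • u i := by
    ext t
    simp [L, mulVec_transpose, vecMul_eq_sum]
  have hLinj : Function.Injective L :=
    mulVec_injective_iff_isUnit.2 ((isUnit_iff_isUnit_det _).2 (by simpa using hu))
  have hLdet : L.det = (of u).det := by
    change LinearMap.det _ = _
    rw [LinearMap.coe_toContinuousLinearMap, LinearMap.det_toLin', det_transpose]
  rw [← hL, integral_image_eq_integral_abs_det_fderiv_smul volume hs
    (fun t _ => L.hasFDerivAt.hasFDerivWithinAt) hLinj.injOn, hLdet]
  simp only [hL, smul_eq_mul]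

theorem stmt10_general (n : ℕ) (hn : 0 < n) (S : Matrix (Fin n) (Fin n) ℝ)
    (hpd : S.PosDef) (hlt : ∀ i j, S i j < 1)
    (u : Fin n → (Fin n → ℝ)) (hGram : ∀ i j, u i ⬝ᵥ u j = S i j)
    (F : Set ((Fin n → ℝ) × ℝ))
    (hF : F = {p : (Fin n → ℝ) × ℝ |
        ∃ t : Fin n → ℝ, (∀ i, 0 ≤ t i) ∧ ∑ i, t i ≤ 1 ∧
          p.1 = ∑ i, t i • u i ∧ Real.sqrt (1 - p.1 ⬝ᵥ p.1) < p.2}) :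
    (∫ p in F, 1 / p.2 ^ (n + 1)) =
      (1 / (n : ℝ)) * ∫ t in {t : Fin n → ℝ | (∀ i, 0 ≤ t i) ∧ ∑ i, t i ≤ 1},
        Real.sqrt S.det / (1 - ∑ i, ∑ j, t i * S i j * t j) ^ ((n : ℝ) / 2) := by
  set φ : (Fin n → ℝ) → (Fin n → ℝ) := fun t => ∑ i, t i • u i
  have hφ : ∀ t, φ t ⬝ᵥ φ t = ∑ i, ∑ j, t i * S i j * t j := by
    simp only [φ, sum_smul_dotProduct_sum_smul, hGram, implies_true]
  have hK : IsCompact (φ '' cornerSimplex (Fin n)) :=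
    (isCompact_cornerSimplex _).image (by fun_prop)
  have hK_pos : ∀ x ∈ φ '' cornerSimplex (Fin n), 0 < √(1 - x ⬝ᵥ x) := by
    rintro _ ⟨t, ht, rfl⟩
    rw [hφ]
    exact Real.sqrt_pos.2 (sub_pos.2 (sum_mul_mul_lt_one_of_mem_cornerSimplex hlt ht))
  have hF' : F = {p | p.1 ∈ φ '' cornerSimplex (Fin n) ∧ √(1 - p.1 ⬝ᵥ p.1) < p.2} := by
    rw [hF]
    ext p
    simp only [mem_image, cornerSimplex, φ]
    aesop
  have hdet_sq := det_sq_of_dotProduct_eq hGram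
  have hdet : |(of u).det| = √S.det := by rw [← hdet_sq, Real.sqrt_sq_eq_abs]
  have hdet_ne : (of u).det ≠ 0 := by
    rw [← pow_ne_zero_iff two_ne_zero, hdet_sq]
    exact hpd.det_pos.ne'
  rw [hF', Measure.volume_eq_prod, setIntegral_prod_region_above_graph_one_div_pow_succ hn
    hK.measurableSet (by fun_prop) hK_pos, setIntegral_image_sum_smul hdet_ne
    (isCompact_cornerSimplex _).measurableSet, ← integral_const_mul]
  refine setIntegral_congr_fun (isCompact_cornerSimplex _).measurableSet fun t ht => ?_
  have hq := sub_pos.2 (sum_mul_mul_lt_one_of_mem_cornerSimplex hlt ht)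
  have hq_sqrt := Real.sqrt_pos.2 hq
  simp only [hdet, sum_smul_dotProduct_sum_smul, hGram, Real.rpow_div_two_eq_sqrt _ hq.le,
    Real.rpow_natCast]
  field_simp

/-- for a positive definite symmetric matrix S with entries < 1 and
vectors u₁,…,uₙ with Gram matrix S, the hyperbolic volume of the "skyscraper" region
F over the simplex spanned by 0, u₁, …, uₙ, cut below by the unit hemisphere, with
respect to dⁿu dv / v^{n+1}, equals (1/n) ∫_{Δₙ} √(det S)(1 - tᵀSt)^{-n/2} dt. -/
theorem stmt10 (n : ℕ) (hn : 0 < n) (S : Matrix (Fin n) (Fin n) ℝ)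
    (hsymm : S.IsSymm) (hpd : S.PosDef) (hlt : ∀ i j, S i j < 1)
    (u : Fin n → (Fin n → ℝ)) (hGram : ∀ i j, u i ⬝ᵥ u j = S i j)
    (F : Set ((Fin n → ℝ) × ℝ))
    (hF : F = {p : (Fin n → ℝ) × ℝ |
        ∃ t : Fin n → ℝ, (∀ i, 0 ≤ t i) ∧ ∑ i, t i ≤ 1 ∧
          p.1 = ∑ i, t i • u i ∧ Real.sqrt (1 - p.1 ⬝ᵥ p.1) < p.2}) :
    (∫ p in F, 1 / p.2 ^ (n + 1)) =
      (1 / (n : ℝ)) * ∫ t in {t : Fin n → ℝ | (∀ i, 0 ≤ t i) ∧ ∑ i, t i ≤ 1},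
        Real.sqrt S.det / (1 - ∑ i, ∑ j, t i * S i j * t j) ^ ((n : ℝ) / 2) :=
  stmt10_general n hn S hpd hlt u hGram F hF
end

section
/- ∫_0^{1/2} ∫_{-ξ₁/√3}^{ξ₁/√3} dξ₂ dξ₁ / (1 - ξ₁² - ξ₂²) = ∫_0^{π/6} log( sin(θ + π/3)/sin(π/3 - θ) ) dθ, and this value equals (1/2)·Л(π/3), where Л(θ) = -∫_0^θ log|2 sin t| dt is the Lobachevsky function. -/
/-!
Substitute ξ₁ = sin θ. The inner integral of 1 / (cos²θ - ξ₂²) over |ξ₂| < sin θ / √3 is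
(1 / cos θ) log((cos θ + sin θ / √3) / (cos θ - sin θ / √3)); the factor 1 / cos θ cancels against
dξ₁ = cos θ dθ, and by the addition formula the ratio is sin(θ + π/3) / sin(π/3 - θ).
Splitting the logarithm as log|2 sin(θ + π/3)| - log|2 sin(π/3 - θ)| turns the θ-integral into
2Л(π/3) - Л(π/2) - Л(π/6). Euler's ∫₀^{π/2} log sin = -(π/2) log 2 gives Л(π/2) = 0, and the
duplication formula Л(2θ) = 2Л(θ) - 2Л(π/2 - θ), from sin 2t = 2 sin t cos t, gives
Л(π/6) = (3/2) Л(π/3) at θ = π/6.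
-/

open MeasureTheory Real

/-- The Lobachevsky function Л(θ) = -∫₀^θ log|2 sin t| dt. -/
noncomputable def lob (θ : ℝ) : ℝ := -∫ t in (0 : ℝ)..θ, Real.log |2 * Real.sin t|

open intervalIntegral Set
open scoped Interval

lemma setIntegral_Ioo_eq_intervalIntegral {f : ℝ → ℝ} {a b : ℝ} (hab : a ≤ b) :
    ∫ x in Ioo a b, f x = ∫ x in a..b, f x := by
  rw [integral_of_le hab, integral_Ioc_eq_integral_Ioo]

lemma hasDerivAt_log_add_div_sub {c y : ℝ} (hp : c + y ≠ 0) (hm : c - y ≠ 0) :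
    HasDerivAt (fun y => log ((c + y) / (c - y))) (2 * c / (c ^ 2 - y ^ 2)) y := by
  have h := (((hasDerivAt_id' y).const_add c).fun_div ((hasDerivAt_id' y).const_sub c) hm).log
    (div_ne_zero hp hm)
  convert h using 1
  rw [show c ^ 2 - y ^ 2 = (c + y) * (c - y) by ring]
  field_simp
  ring

lemma integral_inv_sq_sub_sq {a c : ℝ} (h : |a| < c) :
    ∫ y in -a..a, (c ^ 2 - y ^ 2)⁻¹ = c⁻¹ * log ((c + a) / (c - a)) := by
  obtain ⟨ha₁, ha₂⟩ := abs_lt.1 h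
  have hc : c ≠ 0 := by linarith
  have hy : ∀ y ∈ [[-a, a]], c + y ≠ 0 ∧ c - y ≠ 0 := by
    intro y hy
    rcases mem_uIcc.1 hy with hy | hy <;> constructor <;> linarith
  have hsq : ∀ y ∈ [[-a, a]], c ^ 2 - y ^ 2 ≠ 0 := fun y hy' => by
    rw [sq_sub_sq]; exact mul_ne_zero (hy y hy').1 (hy y hy').2
  rw [integral_eq_sub_of_hasDerivAt (f := fun y => (2 * c)⁻¹ * log ((c + y) / (c - y)))
    (f' := fun y => (c ^ 2 - y ^ 2)⁻¹)
    (fun y hy' => ?deriv) ((ContinuousOn.inv₀ (by fun_prop) hsq).intervalIntegrable)]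
  case deriv =>
    refine ((hasDerivAt_log_add_div_sub (hy y hy').1 (hy y hy').2).const_mul _).congr_deriv ?_
    field_simp
  rw [sub_neg_eq_add, ← sub_eq_add_neg, ← inv_div, log_inv]
  field_simp
  ring

noncomputable def innerIntegral (x : ℝ) : ℝ :=
  (√(1 - x ^ 2))⁻¹ * log ((√(1 - x ^ 2) + x / √3) / (√(1 - x ^ 2) - x / √3))

lemma abs_div_sqrt_three_lt_sqrt_one_sub_sq {x : ℝ} (hx : |x| ≤ 1 / 2) :
    |x / √3| < √(1 - x ^ 2) := by
  have h3 : 1 ≤ √3 := one_le_sqrt.2 (by norm_num)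
  have hx2 : x ^ 2 ≤ 1 / 4 := by nlinarith [sq_abs x, abs_nonneg x]
  calc |x / √3| = |x| / √3 := by rw [abs_div, abs_of_nonneg (sqrt_nonneg 3)]
    _ ≤ |x| := div_le_self (abs_nonneg x) h3
    _ ≤ 1 / 2 := hx
    _ < √(1 - x ^ 2) := (lt_sqrt (by norm_num)).2 (by linarith)

lemma integral_Ioo_eq_innerIntegral {x : ℝ} (hx₀ : 0 ≤ x) (hx : x ≤ 1 / 2) :
    ∫ y in Ioo (-(x / √3)) (x / √3), (1 - x ^ 2 - y ^ 2)⁻¹ = innerIntegral x := by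
  have h := abs_div_sqrt_three_lt_sqrt_one_sub_sq (abs_le.2 ⟨by linarith, hx⟩)
  have hsq : √(1 - x ^ 2) ^ 2 = 1 - x ^ 2 := sq_sqrt (by nlinarith)
  rw [setIntegral_Ioo_eq_intervalIntegral (by simp; positivity), innerIntegral,
    ← integral_inv_sq_sub_sq h, hsq]

lemma continuousOn_innerIntegral : ContinuousOn innerIntegral (Icc (-(1 / 2)) (1 / 2)) := by
  have h : ∀ x ∈ Icc (-(1 / 2) : ℝ) (1 / 2), |x / √3| < √(1 - x ^ 2) := fun x hx =>
    abs_div_sqrt_three_lt_sqrt_one_sub_sq (abs_le.2 hx)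
  refine ContinuousOn.mul (ContinuousOn.inv₀ (by fun_prop) fun x hx => ?_)
    (ContinuousOn.log (ContinuousOn.div (by fun_prop) (by fun_prop) fun x hx => ?_) fun x hx => ?_)
  · exact ((abs_nonneg _).trans_lt (h x hx)).ne'
  · linarith [(abs_lt.1 (h x hx)).2]
  · obtain ⟨h₁, h₂⟩ := abs_lt.1 (h x hx)
    exact div_ne_zero (by linarith) (by linarith)

lemma cos_add_sin_div_sqrt_three (θ : ℝ) :
    cos θ + sin θ / √3 = 2 / √3 * sin (θ + π / 3) := by
  rw [sin_add, sin_pi_div_three, cos_pi_div_three]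
  field_simp
  ring

lemma cos_sub_sin_div_sqrt_three (θ : ℝ) :
    cos θ - sin θ / √3 = 2 / √3 * sin (π / 3 - θ) := by
  rw [sin_sub, sin_pi_div_three, cos_pi_div_three]
  field_simp

lemma cos_mul_innerIntegral_sin {θ : ℝ} (hθ : 0 < cos θ) :
    cos θ * innerIntegral (sin θ) = log (sin (θ + π / 3) / sin (π / 3 - θ)) := by
  have hcos : √(1 - sin θ ^ 2) = cos θ := by rw [← cos_sq', sqrt_sq hθ.le]
  rw [innerIntegral, hcos, cos_add_sin_div_sqrt_three, cos_sub_sin_div_sqrt_three,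
    mul_div_mul_left _ _ (by positivity), mul_inv_cancel_left₀ hθ.ne']

lemma integral_innerIntegral :
    ∫ x in (0 : ℝ)..1 / 2, innerIntegral x =
      ∫ θ in (0 : ℝ)..π / 6, log (sin (θ + π / 3) / sin (π / 3 - θ)) := by
  have himage : sin '' [[0, π / 6]] ⊆ Icc (-(1 / 2)) (1 / 2) := by
    rintro _ ⟨θ, hθ, rfl⟩
    rw [uIcc_of_le (by positivity)] at hθ
    refine ⟨by linarith [sin_nonneg_of_nonneg_of_le_pi hθ.1 (by linarith [hθ.2, pi_pos])], ?_⟩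
    rw [← sin_pi_div_six]
    exact sin_le_sin_of_le_of_le_pi_div_two (by linarith [hθ.1, pi_pos]) (by linarith [pi_pos])
      hθ.2
  have hsub := integral_comp_mul_deriv'' continuousOn_sin
    (fun θ _ => (hasDerivAt_sin θ).hasDerivWithinAt) continuousOn_cos
    (continuousOn_innerIntegral.mono himage)
  rw [sin_zero, sin_pi_div_six] at hsub
  rw [← hsub]
  refine integral_congr fun θ hθ => ?_
  rw [uIcc_of_le (by positivity)] at hθ
  rw [Function.comp_apply, mul_comm, cos_mul_innerIntegral_sin
    (cos_pos_of_mem_Ioo ⟨by linarith [hθ.1, pi_pos], by linarith [hθ.2, pi_pos]⟩)]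

lemma log_abs_two_mul {x : ℝ} (hx : x ≠ 0) : log |2 * x| = log 2 + log x := by
  rw [log_abs, log_mul two_ne_zero hx]

lemma intervalIntegrable_log_abs_two_mul_sin (a b : ℝ) :
    IntervalIntegrable (fun t => log |2 * sin t|) volume a b := by
  have h : AnalyticOnNhd ℝ (fun t => 2 * sin t) [[a, b]] := fun _ _ => by fun_prop
  simpa only [norm_eq_abs] using h.meromorphicOn.intervalIntegrable_log_norm

lemma integral_log_abs_two_mul_sin (a b : ℝ) :
    ∫ t in a..b, log |2 * sin t| = lob a - lob b := by
  rw [lob, lob, ← integral_interval_sub_left (intervalIntegrable_log_abs_two_mul_sin 0 b)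
    (intervalIntegrable_log_abs_two_mul_sin 0 a)]
  ring

lemma log_abs_two_mul_sin_two_mul {t : ℝ} (ht : sin (2 * t) ≠ 0) :
    log |2 * sin (2 * t)| = log |2 * sin t| + log |2 * cos t| := by
  rw [sin_two_mul] at ht ⊢
  obtain ⟨h2s, hc⟩ := mul_ne_zero_iff.1 ht
  have hs : sin t ≠ 0 := right_ne_zero_of_mul h2s
  rw [log_abs_two_mul ht, log_abs_two_mul hs, log_abs_two_mul hc, log_mul h2s hc,
    log_mul two_ne_zero hs]
  ring

lemma lob_zero : lob 0 = 0 := by simp [lob]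

lemma lob_pi_div_two : lob (π / 2) = 0 := by
  have h : ∫ t in (0 : ℝ)..π / 2, log |2 * sin t| =
      ∫ t in (0 : ℝ)..π / 2, (log 2 + log (sin t)) := by
    refine integral_congr_ae (ae_of_all _ fun t ht => ?_)
    rw [uIoc_of_le (by positivity)] at ht
    exact log_abs_two_mul (sin_pos_of_pos_of_lt_pi ht.1 (by linarith [ht.2, pi_pos])).ne'
  rw [lob, h, integral_add (g := fun t => log (sin t)) intervalIntegrable_const
    intervalIntegrable_log_sin, integral_log_sin_zero_pi_div_two, intervalIntegral.integral_const,
    sub_zero, smul_eq_mul]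
  ring

lemma lob_two_mul (θ : ℝ) : lob (2 * θ) = 2 * lob θ - 2 * lob (π / 2 - θ) := by
  have hsplit : ∫ t in (0 : ℝ)..θ, log |2 * sin (2 * t)| =
      ∫ t in (0 : ℝ)..θ, (log |2 * sin t| + log |2 * sin (π / 2 - t)|) := by
    have hsin : AnalyticOnNhd ℝ (fun t => sin (2 * t)) univ := fun _ _ => by fun_prop
    refine integral_congr_codiscreteWithin (Filter.codiscreteWithin_mono (subset_univ _) ?_)
    filter_upwards [hsin.preimage_zero_mem_codiscrete (x := π / 4)
      (by rw [show 2 * (π / 4) = π / 2 by ring, sin_pi_div_two]; exact one_ne_zero)] with t ht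
    rw [sin_pi_div_two_sub]
    exact log_abs_two_mul_sin_two_mul ht
  have hdouble : ∫ t in (0 : ℝ)..θ, log |2 * sin (2 * t)| =
      2⁻¹ * ∫ t in (0 : ℝ)..2 * θ, log |2 * sin t| := by
    rw [integral_comp_mul_left (fun t => log |2 * sin t|) two_ne_zero, mul_zero, smul_eq_mul]
  have hreflect : ∫ t in (0 : ℝ)..θ, log |2 * sin (π / 2 - t)| =
      ∫ t in π / 2 - θ..π / 2, log |2 * sin t| := by
    rw [integral_comp_sub_left (fun t => log |2 * sin t|), sub_zero]
  have hreflect_int : IntervalIntegrable (fun t => log |2 * sin (π / 2 - t)|) volume 0 θ := by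
    simpa using
      (intervalIntegrable_log_abs_two_mul_sin (π / 2) (π / 2 - θ)).comp_sub_left (π / 2)
  rw [integral_add (intervalIntegrable_log_abs_two_mul_sin 0 θ) hreflect_int, hdouble, hreflect,
    integral_log_abs_two_mul_sin, integral_log_abs_two_mul_sin, integral_log_abs_two_mul_sin,
    lob_pi_div_two, lob_zero] at hsplit
  linarith

lemma lob_pi_div_six : lob (π / 6) = 3 / 2 * lob (π / 3) := by
  have h := lob_two_mul (π / 6)
  rw [show 2 * (π / 6) = π / 3 by ring, show π / 2 - π / 6 = π / 3 by ring] at h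
  linarith

lemma integral_log_sin_add_div_sin_sub :
    ∫ θ in (0 : ℝ)..π / 6, log (sin (θ + π / 3) / sin (π / 3 - θ)) =
      1 / 2 * lob (π / 3) := by
  have hsplit : ∫ θ in (0 : ℝ)..π / 6, log (sin (θ + π / 3) / sin (π / 3 - θ)) =
      ∫ θ in (0 : ℝ)..π / 6, (log |2 * sin (θ + π / 3)| - log |2 * sin (π / 3 - θ)|) := by
    refine integral_congr fun θ hθ => ?_
    rw [uIcc_of_le (by positivity)] at hθ
    have h₁ : sin (θ + π / 3) ≠ 0 :=
      (sin_pos_of_pos_of_lt_pi (by linarith [hθ.1, pi_pos]) (by linarith [hθ.2, pi_pos])).ne'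
    have h₂ : sin (π / 3 - θ) ≠ 0 :=
      (sin_pos_of_pos_of_lt_pi (by linarith [hθ.2, pi_pos]) (by linarith [hθ.1, pi_pos])).ne'
    simp only [log_div h₁ h₂, log_abs_two_mul h₁, log_abs_two_mul h₂]
    ring
  have hshift : IntervalIntegrable (fun θ => log |2 * sin (θ + π / 3)|) volume 0 (π / 6) := by
    simpa using
      (intervalIntegrable_log_abs_two_mul_sin (π / 3) (π / 6 + π / 3)).comp_add_right (π / 3)
  have hreflect : IntervalIntegrable (fun θ => log |2 * sin (π / 3 - θ)|) volume 0 (π / 6) := by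
    simpa using
      (intervalIntegrable_log_abs_two_mul_sin (π / 3) (π / 3 - π / 6)).comp_sub_left (π / 3)
  rw [hsplit, integral_sub hshift hreflect,
    integral_comp_add_right (fun t => log |2 * sin t|),
    integral_comp_sub_left (fun t => log |2 * sin t|), integral_log_abs_two_mul_sin,
    integral_log_abs_two_mul_sin, show π / 6 + π / 3 = π / 2 by ring,
    show π / 3 - π / 6 = π / 6 by ring, lob_pi_div_two, lob_pi_div_six]
  ring_nf

/-- ∫₀^{1/2} ∫_{-ξ₁/√3}^{ξ₁/√3} dξ₂dξ₁/(1-ξ₁²-ξ₂²)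
= ∫₀^{π/6} log( sin(θ+π/3)/sin(π/3-θ) ) dθ, and this value equals (1/2)Л(π/3). -/
theorem stmt12 :
    ((∫ x in Set.Ioo (0 : ℝ) (1 / 2),
        ∫ y in Set.Ioo (-(x / Real.sqrt 3)) (x / Real.sqrt 3), (1 - x ^ 2 - y ^ 2)⁻¹) =
      ∫ θ in Set.Ioo (0 : ℝ) (π / 6),
        Real.log (Real.sin (θ + π / 3) / Real.sin (π / 3 - θ))) ∧
    (∫ θ in Set.Ioo (0 : ℝ) (π / 6),
        Real.log (Real.sin (θ + π / 3) / Real.sin (π / 3 - θ))) =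
      (1 / 2) * lob (π / 3) := by
  have hπ : (0 : ℝ) ≤ π / 6 := by positivity
  refine ⟨?_, by rw [setIntegral_Ioo_eq_intervalIntegral hπ, integral_log_sin_add_div_sin_sub]⟩
  rw [setIntegral_congr_fun measurableSet_Ioo
      fun x hx => integral_Ioo_eq_innerIntegral hx.1.le hx.2.le,
    setIntegral_Ioo_eq_intervalIntegral (by norm_num), setIntegral_Ioo_eq_intervalIntegral hπ,
    integral_innerIntegral]
end

section
/- The Lobachevsky function satisfies Л(ω) = (1/2) Im(Li₂(e^{2iω})) for all real ω, where Li₂(z) = Σ_{r≥1} z^r/r² is the dilogarithm. -/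
open Real

/-- The dilogarithm Li₂(z) = Σ_{r≥1} z^r / r². -/
noncomputable def dilog (z : ℂ) : ℂ := ∑' r : ℕ, z ^ (r + 1) / ((r : ℂ) + 1) ^ 2

/-!
For `|x| < 1`, expanding `-log (1 - x e^{2it}) = ∑ xⁿ e^{2int} / n` and integrating term by term
(the `n`-th term integrates to `(xⁿ e^{2inω} - xⁿ) / (2 i n²)`) gives
`∫₀^ω -log |1 - x e^{2it}| dt = ½ Im Li₂(x e^{2iω})`, because `Li₂(x)` is real.
Now let `x → 1⁻`. On the right, `Li₂` is continuous on the closed unit disc, its series being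
dominated there by `∑ 1/n²`. On the left, `|1 - e^{2it}| = 2 |sin t|`, and dominated convergence
applies with the integrable majorant `log 2 - log |sin t|`, since `|sin t| ≤ |1 - x e^{2it}| ≤ 2`.
-/

open MeasureTheory Filter Set Topology Complex

lemma norm_pow_div_sq_le {z : ℂ} (hz : ‖z‖ ≤ 1) (n : ℕ) :
    ‖z ^ n / (n : ℂ) ^ 2‖ ≤ 1 / (n : ℝ) ^ 2 := by
  rw [norm_div, norm_pow, norm_pow, Complex.norm_natCast]
  exact div_le_div_of_nonneg_right (pow_le_one₀ (norm_nonneg z) hz) (by positivity)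

lemma summable_pow_div_sq {z : ℂ} (hz : ‖z‖ ≤ 1) :
    Summable fun n : ℕ => z ^ n / (n : ℂ) ^ 2 :=
  .of_norm_bounded (Real.summable_one_div_nat_pow.mpr one_lt_two) (norm_pow_div_sq_le hz)

/-- The `n = 0` term is `z ^ 0 / 0 = 0`. -/
lemma dilog_eq_tsum (z : ℂ) : dilog z = ∑' n : ℕ, z ^ n / (n : ℂ) ^ 2 := by
  by_cases h : Summable fun n : ℕ => z ^ n / (n : ℂ) ^ 2
  · simp [h.tsum_eq_zero_add, dilog]
  · rw [tsum_eq_zero_of_not_summable h, dilog, tsum_eq_zero_of_not_summable]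
    rw [← summable_nat_add_iff 1] at h
    exact_mod_cast h

lemma hasSum_dilog {z : ℂ} (hz : ‖z‖ ≤ 1) :
    HasSum (fun n : ℕ => z ^ n / (n : ℂ) ^ 2) (dilog z) :=
  dilog_eq_tsum z ▸ (summable_pow_div_sq hz).hasSum

lemma continuousOn_dilog : ContinuousOn dilog (Metric.closedBall 0 1) := by
  simp_rw [funext dilog_eq_tsum]
  exact continuousOn_tsum (fun n => by fun_prop) (Real.summable_one_div_nat_pow.mpr one_lt_two)
    fun n z hz => norm_pow_div_sq_le (mem_closedBall_zero_iff.mp hz) n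

lemma tendsto_dilog_ofReal_mul {z : ℂ} (hz : ‖z‖ ≤ 1) :
    Tendsto (fun x : ℝ => dilog (x * z)) (𝓝[<] 1) (𝓝 (dilog z)) := by
  have hmap : Tendsto (fun x : ℝ => (x : ℂ) * z) (𝓝[<] 1) (𝓝[Metric.closedBall 0 1] z) := by
    refine tendsto_nhdsWithin_iff.mpr
      ⟨?_, eventually_of_mem (Ioo_mem_nhdsLT one_pos) fun x hx => ?_⟩
    · have : Tendsto (fun x : ℝ => (x : ℂ) * z) (𝓝 1) (𝓝 ((1 : ℝ) * z)) :=
        (continuous_ofReal.mul continuous_const).tendsto 1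
      simpa using this.mono_left nhdsWithin_le_nhds
    · rw [mem_closedBall_zero_iff, norm_mul, norm_real, Real.norm_eq_abs, abs_of_pos hx.1]
      exact mul_le_one₀ hx.2.le (norm_nonneg z) hz
  exact (continuousOn_dilog z (mem_closedBall_zero_iff.mpr hz)).tendsto.comp hmap

lemma dilog_ofReal_im (x : ℝ) : (dilog x).im = 0 := by
  have : dilog x = ((∑' r : ℕ, x ^ (r + 1) / ((r : ℝ) + 1) ^ 2 : ℝ) : ℂ) := by
    rw [Complex.ofReal_tsum]
    push_cast
    rfl
  rw [this, ofReal_im]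

lemma norm_exp_two_mul_I_mul_ofReal (t : ℝ) : ‖exp (2 * I * t)‖ = 1 := by
  rw [show 2 * I * t = ((2 * t : ℝ) : ℂ) * I by push_cast; ring, norm_exp_ofReal_mul_I]

lemma norm_one_sub_exp_two_mul_I (t : ℝ) : ‖1 - exp (2 * I * t)‖ = 2 * |Real.sin t| := by
  rw [norm_sub_rev, show 2 * I * t = I * ((2 * t : ℝ) : ℂ) by push_cast; ring,
    norm_exp_I_mul_ofReal_sub_one]
  simp

lemma lob_eq_integral_neg_log_norm_one_sub_exp (ω : ℝ) :
    lob ω = ∫ t in (0 : ℝ)..ω, -Real.log ‖1 - exp (2 * I * t)‖ := by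
  simp [lob, norm_one_sub_exp_two_mul_I]

lemma sq_norm_one_sub_mul_exp_two_mul_I (x t : ℝ) :
    ‖1 - x * exp (2 * I * t)‖ ^ 2 = 1 - 2 * x * Real.cos (2 * t) + x ^ 2 := by
  rw [show 2 * I * t = ((2 * t : ℝ) : ℂ) * I by push_cast; ring, exp_mul_I, ← ofReal_cos,
    ← ofReal_sin, Complex.sq_norm, normSq_apply]
  simp only [sub_re, sub_im, one_re, one_im, mul_re, mul_im, add_re, add_im, ofReal_re, ofReal_im,
    I_re, I_im]
  nlinarith [Real.sin_sq_add_cos_sq (2 * t)]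

lemma norm_one_sub_mul_exp_two_mul_I_le {x : ℝ} (hx : |x| ≤ 1) (t : ℝ) :
    ‖1 - x * exp (2 * I * t)‖ ≤ 2 := by
  calc ‖1 - x * exp (2 * I * t)‖ ≤ ‖(1 : ℂ)‖ + ‖x * exp (2 * I * t)‖ := norm_sub_le _ _
    _ ≤ 2 := by
      rw [norm_one, norm_mul, norm_exp_two_mul_I_mul_ofReal, mul_one, norm_real, Real.norm_eq_abs]
      linarith

lemma abs_sin_le_norm_one_sub_mul_exp_two_mul_I {x : ℝ} (hx : 0 ≤ x) (t : ℝ) :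
    |Real.sin t| ≤ ‖1 - x * exp (2 * I * t)‖ := by
  refine abs_le_of_sq_le_sq' ?_ (norm_nonneg _) |>.2
  rw [sq_abs, sq_norm_one_sub_mul_exp_two_mul_I, Real.cos_two_mul, Real.cos_sq']
  -- the difference is `(1 - x)² cos² t + (2x + x²) sin² t`
  nlinarith [Real.sin_sq_le_one t,
    mul_nonneg (sq_nonneg (1 - x)) (sub_nonneg.2 (Real.sin_sq_le_one t))]

lemma abs_log_norm_one_sub_mul_exp_two_mul_I_le {x : ℝ} (hx0 : 0 ≤ x) (hx1 : x ≤ 1) {t : ℝ}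
    (ht : Real.sin t ≠ 0) :
    |Real.log ‖1 - x * exp (2 * I * t)‖| ≤ Real.log 2 - Real.log |Real.sin t| := by
  have hsin := abs_sin_le_norm_one_sub_mul_exp_two_mul_I hx0 t
  have hpos : 0 < |Real.sin t| := abs_pos.mpr ht
  have hupper := Real.log_le_log (hpos.trans_le hsin)
    (norm_one_sub_mul_exp_two_mul_I_le (abs_le.mpr ⟨by linarith, hx1⟩) t)
  have hlower := Real.log_le_log hpos hsin
  have hlog_sin : Real.log |Real.sin t| ≤ 0 :=
    Real.log_nonpos (abs_nonneg _) (Real.abs_sin_le_one t)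
  have hlog_two : 0 ≤ Real.log 2 := Real.log_nonneg one_le_two
  rw [abs_le]
  constructor <;> linarith

lemma integral_mul_exp_two_mul_I_pow_div (w : ℂ) (n : ℕ) (ω : ℝ) :
    ∫ t in (0 : ℝ)..ω, (w * exp (2 * I * t)) ^ n / n =
      ((w * exp (2 * I * ω)) ^ n - w ^ n) / (2 * I * (n : ℂ) ^ 2) := by
  rcases n.eq_zero_or_pos with rfl | hn
  · simp
  have hn' : (n : ℂ) ≠ 0 := by exact_mod_cast hn.ne'
  have hc : 2 * n * I ≠ 0 := by simp [hn', I_ne_zero]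
  have hterm (t : ℝ) : (w * exp (2 * I * t)) ^ n / n = w ^ n / n * exp (2 * n * I * t) := by
    rw [mul_pow, ← Complex.exp_nat_mul]
    ring_nf
  simp_rw [hterm, intervalIntegral.integral_const_mul, integral_exp_mul_complex hc, mul_pow,
    ← Complex.exp_nat_mul]
  simp only [ofReal_zero, mul_zero, Complex.exp_zero]
  field_simp

lemma integral_neg_log_one_sub_mul_exp_two_mul_I {w : ℂ} (hw : ‖w‖ < 1) (ω : ℝ) :
    ∫ t in (0 : ℝ)..ω, -log (1 - w * exp (2 * I * t)) =
      (dilog (w * exp (2 * I * ω)) - dilog w) / (2 * I) := by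
  have hnorm (t : ℝ) : ‖w * exp (2 * I * t)‖ = ‖w‖ := by
    rw [norm_mul, norm_exp_two_mul_I_mul_ofReal, mul_one]
  have hseries : HasSum (fun n : ℕ => ∫ t in (0 : ℝ)..ω, (w * exp (2 * I * t)) ^ n / n)
      (∫ t in (0 : ℝ)..ω, -log (1 - w * exp (2 * I * t))) := by
    refine intervalIntegral.hasSum_integral_of_dominated_convergence (fun n _ => ‖w‖ ^ n)
      (fun n => by fun_prop) (fun n => ae_of_all _ fun t _ => ?_)
      (ae_of_all _ fun t _ => summable_geometric_of_lt_one (norm_nonneg w) hw)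
      intervalIntegrable_const
      (ae_of_all _ fun t _ => hasSum_taylorSeries_neg_log (by rwa [hnorm]))
    rcases n.eq_zero_or_pos with rfl | hn
    · simp
    rw [norm_div, norm_pow, hnorm, Complex.norm_natCast]
    exact div_le_self (by positivity) (by exact_mod_cast hn)
  have hdilog : HasSum (fun n : ℕ => ∫ t in (0 : ℝ)..ω, (w * exp (2 * I * t)) ^ n / n)
      ((dilog (w * exp (2 * I * ω)) - dilog w) / (2 * I)) := by
    have hw' : ‖w * exp (2 * I * ω)‖ ≤ 1 := (hnorm ω).trans_le hw.le
    refine (((hasSum_dilog hw').sub (hasSum_dilog hw.le)).div_const (2 * I)).congr_fun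
      fun n => ?_
    rw [integral_mul_exp_two_mul_I_pow_div]
    ring
  exact hseries.unique hdilog

lemma integral_neg_log_norm_one_sub_mul_exp_two_mul_I {x : ℝ} (hx : |x| < 1) (ω : ℝ) :
    ∫ t in (0 : ℝ)..ω, -Real.log ‖1 - x * exp (2 * I * t)‖ =
      (dilog (x * exp (2 * I * ω))).im / 2 := by
  have hx' : ‖(x : ℂ)‖ < 1 := by rwa [norm_real, Real.norm_eq_abs]
  have hcont : Continuous fun t : ℝ => -log (1 - x * exp (2 * I * t)) := by
    refine .neg <| .clog (by fun_prop) fun t => ?_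
    rw [sub_eq_add_neg]
    refine mem_slitPlane_of_norm_lt_one ?_
    rwa [norm_neg, norm_mul, norm_exp_two_mul_I_mul_ofReal, mul_one]
  calc ∫ t in (0 : ℝ)..ω, -Real.log ‖1 - x * exp (2 * I * t)‖
      = ∫ t in (0 : ℝ)..ω, RCLike.re (-log (1 - x * exp (2 * I * t))) := by simp [log_re]
    _ = RCLike.re (∫ t in (0 : ℝ)..ω, -log (1 - x * exp (2 * I * t))) :=
        intervalIntegral.intervalIntegral_re (hcont.intervalIntegrable 0 ω)
    _ = (dilog (x * exp (2 * I * ω))).im / 2 := by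
        rw [integral_neg_log_one_sub_mul_exp_two_mul_I hx', RCLike.re_to_complex,
          div_mul_eq_div_div, div_I]
        simp [dilog_ofReal_im]

lemma ae_sin_ne_zero : ∀ᵐ t : ℝ, Real.sin t ≠ 0 := by
  have hzeros : {t : ℝ | Real.sin t = 0} ⊆ range fun n : ℤ => (n : ℝ) * π := fun t ht =>
    Real.sin_eq_zero_iff.mp ht
  simpa [ae_iff] using ((countable_range _).mono hzeros).measure_zero volume

lemma tendsto_integral_neg_log_norm_one_sub_mul_exp_two_mul_I (ω : ℝ) :
    Tendsto (fun x : ℝ => ∫ t in (0 : ℝ)..ω, -Real.log ‖1 - x * exp (2 * I * t)‖) (𝓝[<] 1)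
      (𝓝 (lob ω)) := by
  rw [lob_eq_integral_neg_log_norm_one_sub_exp]
  have hx : ∀ᶠ x in 𝓝[<] (1 : ℝ), x ∈ Ioo 0 1 := Ioo_mem_nhdsLT one_pos
  refine intervalIntegral.tendsto_integral_filter_of_dominated_convergence
    (fun t => Real.log 2 - Real.log |Real.sin t|)
    (Eventually.of_forall fun x => Measurable.aestronglyMeasurable (by fun_prop))
    (hx.mono fun x hx => ?_) ?_ ?_
  · filter_upwards [ae_sin_ne_zero] with t ht _
    rw [norm_neg, Real.norm_eq_abs]
    exact abs_log_norm_one_sub_mul_exp_two_mul_I_le hx.1.le hx.2.le ht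
  · simpa [Real.log_abs] using
      intervalIntegrable_const.sub (intervalIntegrable_log_sin (a := 0) (b := ω))
  · filter_upwards [ae_sin_ne_zero] with t ht _
    have hne : ‖1 - ((1 : ℝ) : ℂ) * exp (2 * I * t)‖ ≠ 0 := by
      simpa [norm_one_sub_exp_two_mul_I] using ht
    have hcont : ContinuousAt (fun x : ℝ => -Real.log ‖1 - x * exp (2 * I * t)‖) 1 :=
      (ContinuousAt.log (f := fun x : ℝ => ‖1 - x * exp (2 * I * t)‖) (by fun_prop) hne).neg
    simpa using hcont.tendsto.mono_left nhdsWithin_le_nhds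

/-- Л(ω) = (1/2) Im Li₂(e^{2iω}) for all real ω. -/
theorem stmt16 (ω : ℝ) :
    lob ω = (1 / 2) * (dilog (Complex.exp (2 * Complex.I * ω))).im := by
  have hz : ‖exp (2 * I * ω)‖ ≤ 1 := (norm_exp_two_mul_I_mul_ofReal ω).le
  have habel := ((continuous_im.tendsto _).comp (tendsto_dilog_ofReal_mul hz)).div_const 2
  have hidentity : (fun x : ℝ => ∫ t in (0 : ℝ)..ω, -Real.log ‖1 - x * exp (2 * I * t)‖)
      =ᶠ[𝓝[<] 1] fun x => (dilog (x * exp (2 * I * ω))).im / 2 :=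
    eventually_of_mem (Ioo_mem_nhdsLT one_pos) fun x hx =>
      integral_neg_log_norm_one_sub_mul_exp_two_mul_I (abs_lt.mpr ⟨by linarith [hx.1], hx.2⟩) ω
  rw [tendsto_nhds_unique
    ((tendsto_integral_neg_log_norm_one_sub_mul_exp_two_mul_I ω).congr' hidentity) habel]
  ring
end
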